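/- One-step PDHG inequality with error terms. Let E and F be real inner product spaces, X ⊆ E and Y ⊆ F, K : E → F a continuous linear map with adjoint K†, c ∈ E, b ∈ F, τ, σ > 0, and noise vectors ξ ∈ E, ζ ∈ F. Suppose x ∈ E, x⁺ ∈ X, y ∈ F, y⁺ ∈ Y satisfy the projection variational inequalities: (i) ⟪(x − τ(c − K† y + ξ)) − x⁺, z − x⁺⟫ ≤ 0 for all z ∈ X, and (ii) ⟪(y + σ(b − K(2x⁺ − x) − ζ)) − y⁺, w − y⁺⟫ ≤ 0 for all w ∈ Y. Then for every x̂ ∈ X and ŷ ∈ Y: ⟪c − K† y⁺, x⁺ − x̂⟫ + ⟪K x⁺ − b, y⁺ − ŷ⟫ ≤ (1/(2τ))(‖x̂ − x‖² − ‖x̂ − x⁺‖² − ‖x − x⁺‖²) + (1/(2σ))(‖ŷ − y‖² − ‖ŷ − y⁺‖² − ‖y − y⁺‖²) + ⟪y − y⁺, K(x⁺ − x̂)⟫ − ⟪K(x⁺ − x), y⁺ − ŷ⟫ + ⟪ξ, x̂ − x⁺⟫ + ⟪ζ, ŷ − y⁺⟫. -/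
import Mathlib


open scoped RealInnerProductSpace

/-- **One-step PDHG inequality with error terms.**
Suppose `x⁺` is the projection onto `X` of the noisy primal step
`x − τ(c − K† y + ξ)` and `y⁺` is the projection onto `Y` of the noisy extrapolated
dual step `y + σ(b − K(2x⁺ − x) − ζ)`, characterized by variational inequalities.
Then for every `x̂ ∈ X`, `ŷ ∈ Y`, the stated one-step primal-dual inequality with
error terms holds. -/
theorem one_step_pdhg_inequality
    {E F : Type*} [NormedAddCommGroup E] [InnerProductSpace ℝ E]
    [NormedAddCommGroup F] [InnerProductSpace ℝ F]
    (X : Set E) (Y : Set F)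
    (K : E →L[ℝ] F) (Kd : F →L[ℝ] E)
    (hadj : ∀ (x : E) (y : F), ⟪K x, y⟫ = ⟪x, Kd y⟫)
    (c : E) (b : F) (τ σ : ℝ) (hτ : 0 < τ) (hσ : 0 < σ)
    (ξ : E) (ζ : F)
    (x : E) (xp : E) (hxp : xp ∈ X) (y : F) (yp : F) (hyp : yp ∈ Y)
    (hprimal : ∀ z ∈ X, ⟪(x - τ • (c - Kd y + ξ)) - xp, z - xp⟫ ≤ 0)
    (hdual : ∀ w ∈ Y,
      ⟪(y + σ • (b - K ((2 : ℝ) • xp - x) - ζ)) - yp, w - yp⟫ ≤ 0) :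
    ∀ xhat ∈ X, ∀ yhat ∈ Y,
      ⟪c - Kd yp, xp - xhat⟫ + ⟪K xp - b, yp - yhat⟫ ≤
        (1 / (2 * τ)) * (‖xhat - x‖ ^ 2 - ‖xhat - xp‖ ^ 2 - ‖x - xp‖ ^ 2) +
        (1 / (2 * σ)) * (‖yhat - y‖ ^ 2 - ‖yhat - yp‖ ^ 2 - ‖y - yp‖ ^ 2) +
        ⟪y - yp, K (xp - xhat)⟫ - ⟪K (xp - x), yp - yhat⟫ +
        ⟪ξ, xhat - xp⟫ + ⟪ζ, yhat - yp⟫ := by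

  intro xhat hxhat yhat hyhat
  -- abbreviations
  set v : E := c - Kd y + ξ with hv
  set w : F := b - K ((2 : ℝ) • xp - x) - ζ with hw
  -- primal key inequality
  have key1 : τ * ⟪v, xp - xhat⟫ ≤ ⟪x - xp, xp - xhat⟫ := by
    have h := hprimal xhat hxhat
    rw [sub_right_comm, inner_sub_left, real_inner_smul_left] at h
    have n1 : ⟪v, xp - xhat⟫ = -⟪v, xhat - xp⟫ := by
      rw [← inner_neg_right, neg_sub]
    have n2 : ⟪x - xp, xp - xhat⟫ = -⟪x - xp, xhat - xp⟫ := by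
      rw [← inner_neg_right, neg_sub]
    rw [n1, n2]; nlinarith [h]
  -- dual key inequality
  have key2 : σ * ⟪-w, yp - yhat⟫ ≤ ⟪y - yp, yp - yhat⟫ := by
    have h := hdual yhat hyhat
    rw [add_sub_right_comm, inner_add_left, real_inner_smul_left] at h
    have n1 : ⟪-w, yp - yhat⟫ = ⟪w, yhat - yp⟫ := by
      rw [← inner_neg_neg, neg_neg, neg_sub]
    have n2 : ⟪y - yp, yp - yhat⟫ = -⟪y - yp, yhat - yp⟫ := by
      rw [← inner_neg_right, neg_sub]
    rw [n1, n2]; nlinarith [h]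
  -- norm identities
  have idx : ‖xhat - x‖ ^ 2 - ‖xhat - xp‖ ^ 2 - ‖x - xp‖ ^ 2
      = 2 * ⟪x - xp, xp - xhat⟫ := by
    have e : xhat - x = (xhat - xp) - (x - xp) := by abel
    have e2 : ⟪x - xp, xp - xhat⟫ = -⟪xhat - xp, x - xp⟫ := by
      rw [show xp - xhat = -(xhat - xp) from (neg_sub _ _).symm,
        inner_neg_right, real_inner_comm]
    rw [e, norm_sub_sq_real, e2]; ring
  have idy : ‖yhat - y‖ ^ 2 - ‖yhat - yp‖ ^ 2 - ‖y - yp‖ ^ 2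
      = 2 * ⟪y - yp, yp - yhat⟫ := by
    have e : yhat - y = (yhat - yp) - (y - yp) := by abel
    have e2 : ⟪y - yp, yp - yhat⟫ = -⟪yhat - yp, y - yp⟫ := by
      rw [show yp - yhat = -(yhat - yp) from (neg_sub _ _).symm,
        inner_neg_right, real_inner_comm]
    rw [e, norm_sub_sq_real, e2]; ring
  -- decomposition of primal gap term
  have E1 : ⟪c - Kd yp, xp - xhat⟫
      = ⟪v, xp - xhat⟫ - ⟪ξ, xp - xhat⟫ + ⟪y - yp, K (xp - xhat)⟫ := by
    have hK : ⟪y - yp, K (xp - xhat)⟫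
        = ⟪Kd y, xp - xhat⟫ - ⟪Kd yp, xp - xhat⟫ := by
      rw [real_inner_comm, hadj, map_sub, inner_sub_right,
        real_inner_comm (xp - xhat) (Kd y), real_inner_comm (xp - xhat) (Kd yp)]
    rw [hv, hK]
    simp only [inner_sub_left, inner_add_left]
    ring
  -- decomposition of dual gap term
  have E2 : ⟪K xp - b, yp - yhat⟫
      = ⟪-w, yp - yhat⟫ - ⟪ζ, yp - yhat⟫ - ⟪K (xp - x), yp - yhat⟫ := by
    have e : (2 : ℝ) • xp - x = xp + (xp - x) := by
      rw [two_smul]; abel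
    rw [hw, e, map_add]
    simp only [neg_sub, inner_sub_left, inner_add_left, inner_neg_left]
    ring
  have nξ : ⟪ξ, xhat - xp⟫ = -⟪ξ, xp - xhat⟫ := by
    rw [← inner_neg_right, neg_sub]
  have nζ : ⟪ζ, yhat - yp⟫ = -⟪ζ, yp - yhat⟫ := by
    rw [← inner_neg_right, neg_sub]
  have h1' : ⟪v, xp - xhat⟫ ≤ ⟪x - xp, xp - xhat⟫ / τ := by
    rw [le_div_iff₀ hτ]; nlinarith [key1]
  have h2' : ⟪-w, yp - yhat⟫ ≤ ⟪y - yp, yp - yhat⟫ / σ := by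
    rw [le_div_iff₀ hσ]; nlinarith [key2]
  have eτ : (1 / (2 * τ)) * (2 * ⟪x - xp, xp - xhat⟫)
      = ⟪x - xp, xp - xhat⟫ / τ := by
    field_simp
  have eσ : (1 / (2 * σ)) * (2 * ⟪y - yp, yp - yhat⟫)
      = ⟪y - yp, yp - yhat⟫ / σ := by
    field_simp
  rw [idx, idy, E1, E2, eτ, eσ, nξ, nζ]
  linarith
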